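/- arXiv:2004.01869 — 7 statements merged into one kernel-verified Lean document; each statement's English description precedes it below -/
import Mathlib

section
/- Let C ⊆ R^{n×n} be star-shaped in Z*, where Z* maximizes Z ↦ ⟨B, Z⟩ over C for a fixed matrix B (playing the role of E[A]). Let W be any matrix (playing the role of A − E[A]) and let r > 0. Suppose that for all Z ∈ C with ⟨B, Z* − Z⟩ ≤ r we have ⟨W, Z − Z*⟩ ≤ r/2. Then any maximizer Ẑ of Z ↦ ⟨B + W, Z⟩ over C satisfies ⟨B, Z* − Ẑ⟩ ≤ r. -/
open Finset

/-- trace inner product `⟨M,N⟩ = Tr(M Nᵀ)` on real matrices -/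
noncomputable def ip {n : ℕ} (M N : Matrix (Fin n) (Fin n) ℝ) : ℝ :=
  ∑ i, ∑ j, M i j * N i j

lemma ip_sub_right {n : ℕ} (M X Y : Matrix (Fin n) (Fin n) ℝ) :
    ip M (X - Y) = ip M X - ip M Y := by
  simp [ip, Matrix.sub_apply, mul_sub, Finset.sum_sub_distrib]

lemma ip_add_left {n : ℕ} (M N X : Matrix (Fin n) (Fin n) ℝ) :
    ip (M + N) X = ip M X + ip N X := by
  simp [ip, Matrix.add_apply, add_mul, Finset.sum_add_distrib]

lemma ip_combo {n : ℕ} (M X Y : Matrix (Fin n) (Fin n) ℝ) (t : ℝ) :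
    ip M (t • X + (1 - t) • Y) = t * ip M X + (1 - t) * ip M Y := by
  simp [ip, Matrix.add_apply, Matrix.smul_apply, mul_add, Finset.sum_add_distrib,
    Finset.mul_sum, smul_eq_mul, mul_left_comm]

/-- deterministic core of the fixed-point bound for SDP estimators. -/
theorem stmt_1 {n : ℕ} (B W : Matrix (Fin n) (Fin n) ℝ)
    (C : Set (Matrix (Fin n) (Fin n) ℝ)) (Zstar Zhat : Matrix (Fin n) (Fin n) ℝ)
    (hZstarC : Zstar ∈ C)
    (hmax : ∀ Z ∈ C, ip B Z ≤ ip B Zstar)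
    (hstar : ∀ Z ∈ C, ∀ t : ℝ, t ∈ Set.Icc (0:ℝ) 1 → t • Z + (1 - t) • Zstar ∈ C)
    (r : ℝ) (hr : 0 < r)
    (hosc : ∀ Z ∈ C, ip B (Zstar - Z) ≤ r → ip W (Z - Zstar) ≤ r / 2)
    (hZhatC : Zhat ∈ C)
    (hZhatMax : ∀ Z ∈ C, ip (B + W) Z ≤ ip (B + W) Zhat) :
    ip B (Zstar - Zhat) ≤ r := by
  by_contra hlt
  push_neg at hlt
  set d : ℝ := ip B Zstar - ip B Zhat with hd
  have hdr : r < d := by rw [ip_sub_right] at hlt; exact hlt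
  have hdpos : 0 < d := hr.trans hdr
  set t : ℝ := r / d with ht
  have ht0 : 0 < t := div_pos hr hdpos
  have ht1 : t < 1 := (div_lt_one hdpos).2 hdr
  have hZt : t • Zhat + (1 - t) • Zstar ∈ C :=
    hstar Zhat hZhatC t ⟨le_of_lt ht0, le_of_lt ht1⟩
  have htd : t * d = r := div_mul_cancel₀ r (ne_of_gt hdpos)
  have h1 : ip B (Zstar - (t • Zhat + (1 - t) • Zstar)) = r := by
    rw [ip_sub_right, ip_combo]
    have e : ip B Zstar - (t * ip B Zhat + (1 - t) * ip B Zstar) = t * d := by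
      rw [hd]; ring
    rw [e, htd]
  have h2 := hosc _ hZt (le_of_eq h1)
  rw [ip_sub_right, ip_combo] at h2
  -- h2 : t * ip W Zhat + (1-t) * ip W Zstar - ip W Zstar ≤ r/2
  have h3 := hZhatMax Zstar hZstarC
  rw [ip_add_left, ip_add_left] at h3
  -- d ≤ ip W Zhat - ip W Zstar
  have h4 : d ≤ ip W Zhat - ip W Zstar := by rw [hd]; linarith
  have h5 : t * d ≤ t * (ip W Zhat - ip W Zstar) :=
    mul_le_mul_of_nonneg_left h4 (le_of_lt ht0)
  nlinarith
end

section
/- In the signed stochastic block model with K communities partitioning {1,…,n}, sampling rate δ ∈ (0,1), and edge-sign probabilities 0 ≤ q < 1/2 < p ≤ 1, let E[A] be the matrix with diagonal entries 1, off-diagonal entries δ(2p−1) within communities and δ(2q−1) across communities, let α = δ(p+q−1), J the all-ones matrix, Z* the membership matrix (Z*_{ij} = 1 if i ∼ j, 0 otherwise), and C = {Z ∈ R^{n×n} : Z ⪰ 0, Z_{ij} ∈ [0,1], Z_{ii} = 1}. Then for all Z ∈ C, ⟨E[A] − αJ, Z* − Z⟩ = δ(p−q) · ‖Z* − Z‖₁,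 where ‖M‖₁ = Σ_{i,j} |M_{ij}|. -/
open Finset

/-- exact ℓ₁ curvature of the excess risk in signed clustering
(Proposition 5.1). Communities are encoded by a map `c : Fin n → Fin K`. -/
theorem stmt_3 {n K : ℕ} (c : Fin n → Fin K) (p q δ : ℝ)
    (hq0 : 0 ≤ q) (hq : q < 1/2) (hp : 1/2 < p) (hp1 : p ≤ 1)
    (hδ : δ ∈ Set.Ioo (0:ℝ) 1)
    (EA : Matrix (Fin n) (Fin n) ℝ)
    (hEA : ∀ i j, EA i j =
      if i = j then 1 else if c i = c j then δ * (2*p - 1) else δ * (2*q - 1))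
    (Zstar : Matrix (Fin n) (Fin n) ℝ)
    (hZstar : ∀ i j, Zstar i j = if c i = c j then 1 else 0)
    (α : ℝ) (hα : α = δ * (p + q - 1))
    (J : Matrix (Fin n) (Fin n) ℝ) (hJ : ∀ i j, J i j = 1)
    (Z : Matrix (Fin n) (Fin n) ℝ)
    (hZpsd : Z.PosSemidef)
    (hZbox : ∀ i j, Z i j ∈ Set.Icc (0:ℝ) 1)
    (hZdiag : ∀ i, Z i i = 1) :
    ip (EA - α • J) (Zstar - Z) = δ * (p - q) * ∑ i, ∑ j, |Zstar i j - Z i j| := by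
  have hpq : 0 < δ * (p - q) := by
    have := hδ.1; nlinarith
  rw [Finset.mul_sum]
  unfold ip
  refine Finset.sum_congr rfl fun i _ => ?_
  rw [Finset.mul_sum]
  refine Finset.sum_congr rfl fun j _ => ?_
  have hb := hZbox i j
  simp only [Matrix.sub_apply, Matrix.smul_apply, hEA, hZstar, hJ, smul_eq_mul, hα]
  by_cases hij : i = j
  · subst hij
    simp [hZdiag i]
  · simp only [hij, if_false]
    by_cases hc : c i = c j
    · simp only [hc, if_pos rfl, if_true]
      rw [abs_of_nonneg (by linarith [hb.2])]
      ring
    · simp only [hc, if_neg hc, if_false]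
      rw [abs_of_nonpos (by linarith [hb.1])]
      ring
end

section
/- Let σ ≥ 0, x* ∈ C^n with |x*_i| = 1, Z* = x* conj(x*)ᵀ, and let M be the Hermitian matrix with M_{ij} = e^{−σ²/2} Z*_{ij} for i ≠ j and M_{ii} = 1. Let C = {Z ∈ H_n : Z ⪰ 0, Z_{ii} = 1}. Then Z* is the unique maximizer of Z ↦ ⟨M, Z⟩ over C, where ⟨M, Z⟩ = Tr(M conj(Z)ᵀ). -/
/-!
Write `M i j = c i j * Z* i j` with weights `c i j > 0` (`1` on the diagonal, `e^{-σ²/2}` off it).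
Then `Re⟨M, Z⟩ = ∑ c i j * Re (Z* i j * conj (Z i j))`, and each summand is at most `c i j`
because `|Z* i j| = 1` while `|Z i j| ≤ 1` for every `Z` in the elliptope (a `2 × 2` principal minor
of `Z` is nonnegative). For unit `u` and `|z| ≤ 1` one has `|u - z|² ≤ 2 (1 - Re (u conj z))`, so
a summand attains its bound only when `Z i j = Z* i j`.
-/

open scoped ComplexOrder

open Finset

/-- Hermitian trace inner product `⟨M,N⟩ = Tr(M conj(N)ᵀ)` on complex matrices. -/
noncomputable def ipC {n : ℕ} (M N : Matrix (Fin n) (Fin n) ℂ) : ℂ :=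
  ∑ i, ∑ j, M i j * star (N i j)

open Matrix ComplexConjugate

theorem Matrix.PosSemidef.norm_sq_apply_le {ι 𝕜 : Type*} [Fintype ι] [RCLike 𝕜]
    {A : Matrix ι ι 𝕜} (hA : A.PosSemidef) (i j : ι) :
    ‖A i j‖ ^ 2 ≤ RCLike.re (A i i) * RCLike.re (A j j) := by
  have hdet := (hA.submatrix ![i, j]).det_nonneg
  simp only [det_fin_two, submatrix_apply, cons_val_zero, cons_val_one, cons_val_fin_one] at hdet
  rw [← hA.isHermitian.apply j i, ← hA.isHermitian.coe_re_apply_self i,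
    ← hA.isHermitian.coe_re_apply_self j, RCLike.star_def, RCLike.mul_conj, ← RCLike.ofReal_mul,
    ← RCLike.ofReal_pow, ← RCLike.ofReal_sub, RCLike.ofReal_nonneg] at hdet
  exact sub_nonneg.mp hdet

theorem Matrix.PosSemidef.norm_apply_le_one {ι 𝕜 : Type*} [Fintype ι] [RCLike 𝕜]
    {A : Matrix ι ι 𝕜} (hA : A.PosSemidef) (hdiag : ∀ i, A i i = 1) (i j : ι) :
    ‖A i j‖ ≤ 1 := by
  have h := hA.norm_sq_apply_le i j
  rw [hdiag, hdiag, RCLike.one_re, one_mul] at h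
  exact (pow_le_one_iff_of_nonneg (norm_nonneg _) two_ne_zero).mp h

namespace Complex

variable {u z : ℂ}

theorem normSq_sub_le_of_norm_eq_one_of_norm_le_one (hu : ‖u‖ = 1) (hz : ‖z‖ ≤ 1) :
    normSq (u - z) ≤ 2 * (1 - (u * conj z).re) := by
  rw [normSq_sub, normSq_eq_norm_sq, normSq_eq_norm_sq, hu]
  nlinarith [norm_nonneg z]

theorem re_mul_conj_le_one (hu : ‖u‖ = 1) (hz : ‖z‖ ≤ 1) : (u * conj z).re ≤ 1 := by
  linarith [normSq_sub_le_of_norm_eq_one_of_norm_le_one hu hz, normSq_nonneg (u - z)]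

theorem eq_of_re_mul_conj_eq_one (hu : ‖u‖ = 1) (hz : ‖z‖ ≤ 1) (h : (u * conj z).re = 1) :
    z = u := by
  have hsq := normSq_sub_le_of_norm_eq_one_of_norm_le_one hu hz
  rw [h, sub_self, mul_zero] at hsq
  exact (sub_eq_zero.mp (normSq_eq_zero.mp (hsq.antisymm (normSq_nonneg _)))).symm

end Complex

theorem re_ipC_eq_sum {n : ℕ} (M N : Matrix (Fin n) (Fin n) ℂ) :
    (ipC M N).re = ∑ p : Fin n × Fin n, (M p.1 p.2 * star (N p.1 p.2)).re := by
  simp only [ipC, Complex.re_sum, Fintype.sum_prod_type]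

theorem re_ipC_le_and_eq_of_unit_entries {n : ℕ} {c : Fin n → Fin n → ℝ}
    {M U Z : Matrix (Fin n) (Fin n) ℂ} (hc : ∀ i j, 0 < c i j)
    (hM : ∀ i j, M i j = c i j * U i j) (hU : ∀ i j, ‖U i j‖ = 1) (hZ : ∀ i j, ‖Z i j‖ ≤ 1) :
    (ipC M Z).re ≤ (ipC M U).re ∧ ((ipC M Z).re = (ipC M U).re → Z = U) := by
  have hterm : ∀ i j (N : Matrix (Fin n) (Fin n) ℂ),
      (M i j * star (N i j)).re = c i j * (U i j * conj (N i j)).re := fun i j N => by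
    rw [hM, mul_assoc, Complex.re_ofReal_mul, Complex.star_def]
  have hU_re : ∀ i j, (U i j * conj (U i j)).re = 1 := fun i j => by
    rw [Complex.mul_conj, Complex.normSq_eq_norm_sq, hU]
    norm_num
  have hle : ∀ p : Fin n × Fin n,
      (M p.1 p.2 * star (Z p.1 p.2)).re ≤ (M p.1 p.2 * star (U p.1 p.2)).re := fun ⟨i, j⟩ => by
    rw [hterm, hterm, hU_re, mul_one]
    exact mul_le_of_le_one_right (hc i j).le (Complex.re_mul_conj_le_one (hU i j) (hZ i j))
  rw [re_ipC_eq_sum, re_ipC_eq_sum]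
  refine ⟨sum_le_sum fun p _ => hle p, fun h => ?_⟩
  ext i j
  have hij := (sum_eq_sum_iff_of_le fun p _ => hle p).mp h (i, j) (mem_univ _)
  rw [hterm, hterm, hU_re, mul_one, mul_eq_left₀ (hc i j).ne'] at hij
  exact Complex.eq_of_re_mul_conj_eq_one (hU i j) (hZ i j) hij

theorem stmt_7_general {n : ℕ} (σ : ℝ)
    (xstar : Fin n → ℂ) (hx : ∀ i, ‖xstar i‖ = 1)
    (Zstar : Matrix (Fin n) (Fin n) ℂ)
    (hZstar : ∀ i j, Zstar i j = xstar i * star (xstar j))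
    (M : Matrix (Fin n) (Fin n) ℂ)
    (hM : ∀ i j, M i j =
      if i = j then 1 else (Real.exp (-σ^2/2) : ℂ) * Zstar i j)
    (C : Set (Matrix (Fin n) (Fin n) ℂ))
    (hC : C = {Z | Z.PosSemidef ∧ ∀ i, Z i i = 1}) :
    Zstar ∈ C ∧
      ∀ Z ∈ C, (ipC M Z).re ≤ (ipC M Zstar).re ∧
        ((ipC M Z).re = (ipC M Zstar).re → Z = Zstar) := by
  have hunit : ∀ i j, ‖Zstar i j‖ = 1 := by simp [hZstar, hx]
  have hdiag : ∀ i, Zstar i i = 1 := fun i => by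
    rw [hZstar, Complex.star_def, Complex.mul_conj, Complex.normSq_eq_norm_sq, hx]
    norm_num
  have hpsd : Zstar.PosSemidef := by
    convert posSemidef_vecMulVec_self_star xstar
    ext i j
    simp [hZstar, vecMulVec_apply]
  have hweights : ∀ i j, M i j = ((if i = j then 1 else Real.exp (-σ^2/2) : ℝ) : ℂ) * Zstar i j :=
    fun i j => by
      rw [hM]
      split_ifs with h
      · simp [h, hdiag]
      · rfl
  subst hC
  refine ⟨⟨hpsd, hdiag⟩, fun Z ⟨hZ, hZdiag⟩ => ?_⟩
  exact re_ipC_le_and_eq_of_unit_entries (fun i j => by split_ifs <;> positivity) hweights hunit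
    (hZ.norm_apply_le_one hZdiag)

/-- exactness of the SDP relaxation of angular synchronization:
Z* = x* x*ᴴ is the unique maximizer of Z ↦ ⟨M, Z⟩ over the elliptope. -/
theorem stmt_7 {n : ℕ} (hn : 0 < n) (σ : ℝ) (hσ : 0 ≤ σ)
    (xstar : Fin n → ℂ) (hx : ∀ i, ‖xstar i‖ = 1)
    (Zstar : Matrix (Fin n) (Fin n) ℂ)
    (hZstar : ∀ i j, Zstar i j = xstar i * star (xstar j))
    (M : Matrix (Fin n) (Fin n) ℂ)
    (hM : ∀ i j, M i j =
      if i = j then 1 else (Real.exp (-σ^2/2) : ℂ) * Zstar i j)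
    (C : Set (Matrix (Fin n) (Fin n) ℂ))
    (hC : C = {Z | Z.PosSemidef ∧ ∀ i, Z i i = 1}) :
    Zstar ∈ C ∧
      ∀ Z ∈ C, (ipC M Z).re ≤ (ipC M Zstar).re ∧
        ((ipC M Z).re = (ipC M Zstar).re → Z = Zstar) :=
  stmt_7_general σ xstar hx Zstar hZstar M hM C hC
end

section
/- For all t ∈ [−1, 1], one has 1 − (2/π)·arcsin(t) = (2/π)·arccos(t), and (2/π)·arccos(t) ≥ 0.878·(1 − t). -/
/-!
Since `t = cos (arccos t)`, the inequality says `0.878 * (1 - cos θ) ≤ (2 / π) * θ` for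
`θ ∈ [0, π]`. The Taylor partial sums of `cos` and `sin` alternately over- and underestimate
them on `[0, ∞)`, which follows by integrating one bound to get the next. The degree-10 lower
bound for `cos` reduces the claim to a polynomial inequality on `[0, π]`, whose margin is only
about `0.06 %` because `0.878` is so close to the Goemans–Williamson constant.
-/

open Real Finset Nat

noncomputable def cosTaylor (n : ℕ) (x : ℝ) : ℝ :=
  ∑ k ∈ range n, (-1) ^ k * x ^ (2 * k) / (2 * k)!

noncomputable def sinTaylor (n : ℕ) (x : ℝ) : ℝ :=
  ∑ k ∈ range n, (-1) ^ k * x ^ (2 * k + 1) / (2 * k + 1)!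

lemma hasDerivAt_pow_div_factorial (m : ℕ) (x : ℝ) :
    HasDerivAt (fun y : ℝ => y ^ (m + 1) / (m + 1)!) (x ^ m / m !) x := by
  refine ((hasDerivAt_pow (m + 1) x).div_const ((m + 1)! : ℝ)).congr_deriv ?_
  rw [Nat.factorial_succ]
  push_cast
  field_simp

lemma hasDerivAt_sinTaylor (n : ℕ) (x : ℝ) : HasDerivAt (sinTaylor n) (cosTaylor n x) x := by
  unfold sinTaylor cosTaylor
  refine HasDerivAt.fun_sum fun k _ => ?_
  simpa only [mul_div_assoc] using (hasDerivAt_pow_div_factorial (2 * k) x).const_mul ((-1) ^ k)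

lemma hasDerivAt_cosTaylor_succ (n : ℕ) (x : ℝ) :
    HasDerivAt (cosTaylor (n + 1)) (-sinTaylor n x) x := by
  have hshift : cosTaylor (n + 1) =
      fun y : ℝ => 1 - ∑ k ∈ range n, (-1 : ℝ) ^ k * (y ^ (2 * k + 1 + 1) / (2 * k + 1 + 1)!) := by
    funext y
    simp only [cosTaylor, sum_range_succ', pow_succ, mul_add, mul_one, mul_zero, pow_zero,
      factorial_zero, cast_one, div_one, sub_eq_neg_add, ← sum_neg_distrib]
    congr 1
    refine sum_congr rfl fun k _ => ?_
    ring_nf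
  rw [hshift, sinTaylor, ← sum_neg_distrib]
  refine (HasDerivAt.fun_sum fun k _ =>
    (hasDerivAt_pow_div_factorial (2 * k + 1) x).const_mul ((-1) ^ k)).const_sub 1 |>.congr_deriv ?_
  simp only [mul_div_assoc, ← sum_neg_distrib]

lemma nonneg_of_hasDerivAt_nonneg {f f' : ℝ → ℝ} (hf : ∀ x, HasDerivAt f (f' x) x)
    (hf' : ∀ x, 0 ≤ x → 0 ≤ f' x) (h0 : f 0 = 0) {x : ℝ} (hx : 0 ≤ x) : 0 ≤ f x := by
  have hmono : MonotoneOn f (Set.Ici 0) :=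
    monotoneOn_of_hasDerivWithinAt_nonneg (convex_Ici 0)
      (fun y _ => (hf y).continuousAt.continuousWithinAt)
      (fun y _ => (hf y).hasDerivWithinAt)
      (fun y hy => hf' y (interior_subset hy))
  simpa [h0] using hmono Set.self_mem_Ici hx hx

lemma sinTaylor_sub_sin_alternating {n : ℕ}
    (hcos : ∀ x, 0 ≤ x → 0 ≤ (-1) ^ n * (cosTaylor (n + 1) x - cos x)) {x : ℝ} (hx : 0 ≤ x) :
    0 ≤ (-1) ^ n * (sinTaylor (n + 1) x - sin x) :=
  nonneg_of_hasDerivAt_nonneg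
    (fun y => ((hasDerivAt_sinTaylor (n + 1) y).sub (hasDerivAt_sin y)).const_mul _) hcos
    (by simp [sinTaylor]) hx

lemma cosTaylor_sub_cos_alternating (n : ℕ) {x : ℝ} (hx : 0 ≤ x) :
    0 ≤ (-1) ^ n * (cosTaylor (n + 1) x - cos x) := by
  induction n generalizing x with
  | zero => simpa [cosTaylor] using cos_le_one x
  | succ n ih =>
    refine nonneg_of_hasDerivAt_nonneg
      (fun y => ((hasDerivAt_cosTaylor_succ (n + 1) y).sub (hasDerivAt_cos y)).const_mul _)
      (fun y hy => ?_) (by simp [cosTaylor, sum_range_succ']) hx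
    convert sinTaylor_sub_sin_alternating (fun y hy => ih hy) hy using 1
    ring

lemma mul_one_sub_cosTaylor_six_le {θ : ℝ} (h0 : 0 ≤ θ) (h1 : θ ≤ 3.141593) :
    0.878 * 3.141593 * (1 - cosTaylor 6 θ) ≤ 2 * θ := by
  norm_num [cosTaylor, sum_range_succ, Nat.factorial]
  -- `2.3315` is close to the point where `θ / (1 - cos θ)` is minimal and the bound is nearly tight.
  nlinarith [sq_nonneg (θ * (θ - 2.3315)), sq_nonneg (θ ^ 2 * (θ - 2.3315)),
    sq_nonneg (θ ^ 3 * (θ - 2.3315)), sq_nonneg (θ ^ 4 * (θ - 2.3315)),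
    mul_nonneg h0 (sub_nonneg.2 h1)]

lemma mul_one_sub_cos_le_two_div_pi_mul {θ : ℝ} (h0 : 0 ≤ θ) (hπ : θ ≤ π) :
    0.878 * (1 - cos θ) ≤ 2 / π * θ := by
  have hcos : cosTaylor 6 θ ≤ cos θ := by
    have h := cosTaylor_sub_cos_alternating 5 h0
    norm_num at h
    linarith
  have hpoly := mul_one_sub_cosTaylor_six_le h0 (hπ.trans pi_lt_d6.le)
  rw [div_mul_eq_mul_div, le_div_iff₀ pi_pos]
  calc 0.878 * (1 - cos θ) * π = 0.878 * π * (1 - cos θ) := by ring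
    _ ≤ 0.878 * 3.141593 * (1 - cosTaylor 6 θ) := by
        gcongr
        · linarith [cos_le_one θ]
        · exact pi_lt_d6.le
    _ ≤ 2 * θ := hpoly

/-- for t ∈ [−1,1], 1 − (2/π)arcsin t = (2/π)arccos t and
(2/π)arccos t ≥ 0.878(1 − t). -/
theorem stmt_10 (t : ℝ) (ht : t ∈ Set.Icc (-1:ℝ) 1) :
    1 - (2 / Real.pi) * Real.arcsin t = (2 / Real.pi) * Real.arccos t ∧
      0.878 * (1 - t) ≤ (2 / Real.pi) * Real.arccos t := by
  refine ⟨?_, ?_⟩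
  · rw [arccos_eq_pi_div_two_sub_arcsin]
    field_simp
  · simpa only [cos_arccos ht.1 ht.2] using
      mul_one_sub_cos_le_two_div_pi_mul (arccos_nonneg t) (arccos_le_pi t)
end

section
/- Grothendieck's identity: let g be a standard Gaussian vector in R^n and u, v unit vectors in R^n. Then E[sign(⟨g, u⟩)·sign(⟨g, v⟩)] = (2/π)·arcsin(⟨u, v⟩). -/
/-!
Write `φ = arccos ⟪u, v⟫`. The law of `(⟪u, g⟫, ⟪v, g⟫)` for a standard Gaussian `g` is
determined by the Gram matrix of `u, v` (compare characteristic functions), so it is also the law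
of `(X, cos φ X + sin φ Y)` for independent standard Gaussians `X, Y`. In polar coordinates
`(X, Y) = r (cos θ, sin θ)` the angle `θ` is uniform, and
`sign X * sign (cos φ X + sin φ Y) = sign (cos θ) * sign (cos (θ - φ))` is `-1` on a set of angles
of measure `2φ` out of `2π`. Hence the expectation is `1 - 2φ/π = (2/π) arcsin ⟪u, v⟫`.
-/

open MeasureTheory ProbabilityTheory Real
open scoped RealInnerProductSpace

namespace Real

lemma measurable_sign : Measurable Real.sign :=
  Measurable.ite measurableSet_Iio measurable_const
    (Measurable.ite measurableSet_Ioi measurable_const measurable_const)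

lemma sign_mul_of_pos {r : ℝ} (hr : 0 < r) (x : ℝ) : sign (r * x) = sign x := by
  rcases lt_trichotomy x 0 with h | rfl | h
  · rw [sign_of_neg h, sign_of_neg (mul_neg_of_pos_of_neg hr h)]
  · simp
  · rw [sign_of_pos h, sign_of_pos (mul_pos hr h)]

lemma abs_sign_le_one (x : ℝ) : |sign x| ≤ 1 := by
  rcases sign_apply_eq x with h | h | h <;> simp [h]

end Real

lemma integral_Ioi_mul_exp_neg_sq_div_two : ∫ r in Set.Ioi (0 : ℝ), r * exp (-r ^ 2 / 2) = 1 := by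
  have h := integral_mul_cexp_neg_mul_sq (b := 1 / 2) (by norm_num)
  have hfun : (fun r : ℝ ↦ (r : ℂ) * Complex.exp (-(1 / 2) * (r : ℂ) ^ 2)) =
      fun r : ℝ ↦ ((r * exp (-r ^ 2 / 2) : ℝ) : ℂ) := by
    ext r; push_cast; ring_nf
  rw [hfun, integral_complex_ofReal] at h
  exact_mod_cast h.trans (by norm_num : (2 * (1 / 2) : ℂ)⁻¹ = ((1 : ℝ) : ℂ))

lemma gaussianPDFReal_mul_gaussianPDFReal (x y : ℝ) :
    gaussianPDFReal 0 1 x * gaussianPDFReal 0 1 y = (2 * π)⁻¹ * exp (-(x ^ 2 + y ^ 2) / 2) := by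
  simp only [gaussianPDFReal, NNReal.coe_one, mul_one, sub_zero]
  rw [mul_mul_mul_comm, ← exp_add, ← mul_inv, mul_self_sqrt (by positivity)]
  ring_nf

lemma gaussianReal_prod_gaussianReal :
    (gaussianReal 0 1).prod (gaussianReal 0 1) =
      volume.withDensity (fun p : ℝ × ℝ ↦ gaussianPDF 0 1 p.1 * gaussianPDF 0 1 p.2) := by
  rw [gaussianReal_of_var_ne_zero _ one_ne_zero,
    prod_withDensity (measurable_gaussianPDF _ _) (measurable_gaussianPDF _ _),
    ← Measure.volume_eq_prod]

/-- In polar coordinates the standard Gaussian on `ℝ²` is `r e^{-r²/2} dr ⊗ dθ / 2π`, and the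
radial factor has total mass one. -/
lemma integral_gaussianReal_prod_of_smul_invariant {f : ℝ × ℝ → ℝ}
    (hf : ∀ r : ℝ, 0 < r → ∀ p, f (r • p) = f p) :
    ∫ p, f p ∂(gaussianReal 0 1).prod (gaussianReal 0 1) =
      (2 * π)⁻¹ * ∫ θ in -π..π, f (cos θ, sin θ) := by
  have hpolar : ∀ p ∈ polarCoord.target,
      p.1 • ((gaussianPDF 0 1 (polarCoord.symm p).1 * gaussianPDF 0 1 (polarCoord.symm p).2).toReal
        • f (polarCoord.symm p)) =
        (2 * π)⁻¹ * (p.1 * exp (-p.1 ^ 2 / 2) * f (cos p.2, sin p.2)) := by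
    rintro ⟨r, θ⟩ ⟨hr, -⟩
    have hsymm : polarCoord.symm (r, θ) = r • (cos θ, sin θ) := by
      simp [polarCoord_symm_apply]
    have hr2 : (r * cos θ) ^ 2 + (r * sin θ) ^ 2 = r ^ 2 := by
      rw [mul_pow, mul_pow, ← mul_add, cos_sq_add_sin_sq, mul_one]
    rw [hsymm, hf r hr, ENNReal.toReal_mul, toReal_gaussianPDF, toReal_gaussianPDF]
    simp only [Prod.smul_fst, Prod.smul_snd, smul_eq_mul]
    rw [gaussianPDFReal_mul_gaussianPDFReal, hr2]
    ring
  rw [gaussianReal_prod_gaussianReal, integral_withDensity_eq_integral_toReal_smul (by fun_prop)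
    (ae_of_all _ fun _ ↦ ENNReal.mul_lt_top gaussianPDF_lt_top gaussianPDF_lt_top),
    ← integral_comp_polarCoord_symm,
    setIntegral_congr_fun polarCoord.open_target.measurableSet hpolar,
    polarCoord_target, Measure.volume_eq_prod, ← Measure.prod_restrict, integral_const_mul,
    integral_prod_mul (fun r ↦ r * exp (-r ^ 2 / 2)) (fun θ ↦ f (cos θ, sin θ)),
    integral_Ioi_mul_exp_neg_sq_div_two, one_mul,
    intervalIntegral.integral_of_le (by linarith [pi_pos]), integral_Ioc_eq_integral_Ioo]

lemma intervalIntegrable_sign_cos_mul_sign_cos_sub (φ a b : ℝ) :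
    IntervalIntegrable (fun θ ↦ sign (cos θ) * sign (cos (θ - φ))) volume a b := by
  refine intervalIntegrable_const (c := (1 : ℝ)).mono_fun' ?_ (ae_of_all _ fun θ ↦ ?_)
  · exact ((measurable_sign.comp measurable_cos).mul
      (measurable_sign.comp (measurable_cos.comp (measurable_id.sub_const φ)))).aestronglyMeasurable
  · simpa [abs_mul] using mul_le_one₀ (abs_sign_le_one _) (abs_nonneg _) (abs_sign_le_one _)

lemma integral_sign_cos_mul_sign_cos_sub {φ : ℝ} (h0 : 0 ≤ φ) (hπ : φ ≤ π) :
    ∫ θ in -π..π, sign (cos θ) * sign (cos (θ - φ)) = 2 * π - 4 * φ := by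
  set K := fun θ ↦ sign (cos θ) * sign (cos (θ - φ)) with hK
  have hKint : ∀ a b, IntervalIntegrable K volume a b :=
    intervalIntegrable_sign_cos_mul_sign_cos_sub φ
  -- both factors change sign under `θ ↦ θ + π`
  have hper : Function.Periodic K π := fun θ ↦ by
    simp only [hK, add_sub_right_comm, cos_add_pi, sign_neg, neg_mul_neg]
  have hneg : Set.EqOn K (fun _ ↦ -1) (Set.uIoo (-(π / 2)) (φ - π / 2)) := by
    rw [Set.uIoo_of_le (by linarith)]
    rintro θ ⟨h1, h2⟩
    have hcos : 0 < cos θ := cos_pos_of_mem_Ioo ⟨h1, by linarith⟩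
    have hcos' : cos (θ - φ) < 0 := by
      rw [← cos_neg, neg_sub]
      exact cos_neg_of_pi_div_two_lt_of_lt (by linarith) (by linarith)
    simp [hK, sign_of_pos hcos, sign_of_neg hcos']
  have hpos : Set.EqOn K (fun _ ↦ 1) (Set.uIoo (φ - π / 2) (π / 2)) := by
    rw [Set.uIoo_of_le (by linarith)]
    rintro θ ⟨h1, h2⟩
    have hcos : 0 < cos θ := cos_pos_of_mem_Ioo ⟨by linarith, h2⟩
    have hcos' : 0 < cos (θ - φ) := cos_pos_of_mem_Ioo ⟨by linarith, by linarith⟩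
    simp [hK, sign_of_pos hcos, sign_of_pos hcos']
  calc ∫ θ in -π..π, K θ
      = ∫ θ in -π..-π + (2 : ℤ) • π, K θ := by congr 1; ring
    _ = 2 * ∫ θ in -(π / 2)..-(π / 2) + π, K θ := by
        rw [hper.intervalIntegral_add_zsmul_eq 2 _ hKint, hper.intervalIntegral_add_eq _ (-(π / 2))]
        simp
    _ = 2 * ((∫ θ in -(π / 2)..φ - π / 2, K θ) + ∫ θ in φ - π / 2..π / 2, K θ) := by
        rw [intervalIntegral.integral_add_adjacent_intervals (hKint _ _) (hKint _ _)]
        ring_nf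
    _ = 2 * π - 4 * φ := by
        rw [intervalIntegral.integral_congr_uIoo hneg, intervalIntegral.integral_congr_uIoo hpos,
          intervalIntegral.integral_const, intervalIntegral.integral_const, smul_eq_mul,
          smul_eq_mul]
        ring

lemma integral_sign_mul_sign_cos_mul_add_sin_mul {φ : ℝ} (h0 : 0 ≤ φ) (hπ : φ ≤ π) :
    ∫ p, sign p.1 * sign (cos φ * p.1 + sin φ * p.2) ∂(gaussianReal 0 1).prod (gaussianReal 0 1) =
      1 - 2 * φ / π := by
  have hscale : ∀ r : ℝ, 0 < r → ∀ p : ℝ × ℝ,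
      sign (r • p).1 * sign (cos φ * (r • p).1 + sin φ * (r • p).2) =
        sign p.1 * sign (cos φ * p.1 + sin φ * p.2) := by
    intro r hr p
    simp only [Prod.smul_fst, Prod.smul_snd, smul_eq_mul]
    rw [sign_mul_of_pos hr, ← sign_mul_of_pos hr (cos φ * p.1 + sin φ * p.2)]
    ring_nf
  have hcos : ∀ θ, cos φ * cos θ + sin φ * sin θ = cos (θ - φ) := fun θ ↦ by
    rw [cos_sub]; ring
  rw [integral_gaussianReal_prod_of_smul_invariant hscale]
  simp only [hcos]
  rw [integral_sign_cos_mul_sign_cos_sub h0 hπ]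
  field_simp
  ring

lemma stdGaussian_map_innerSL_prod_single_cos_sin (φ : ℝ) :
    (stdGaussian (EuclideanSpace ℝ (Fin 2))).map
        ((innerSL ℝ (EuclideanSpace.single 0 1)).prod (innerSL ℝ !₂[cos φ, sin φ])) =
      ((gaussianReal 0 1).prod (gaussianReal 0 1)).map
        (fun p ↦ (p.1, cos φ * p.1 + sin φ * p.2)) := by
  rw [← map_pi_eq_stdGaussian, ← (measurePreserving_finTwoArrow (gaussianReal 0 1)).map_eq,
    Measure.map_map (by fun_prop) (by fun_prop), Measure.map_map (by fun_prop) (by fun_prop)]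
  congr 1
  ext x <;> simp [PiLp.inner_apply, Fin.sum_univ_two, mul_comm]

lemma norm_smul_add_smul_eq_of_inner_eq {E F : Type*} [NormedAddCommGroup E]
    [InnerProductSpace ℝ E] [NormedAddCommGroup F] [InnerProductSpace ℝ F] {u v : E} {u' v' : F}
    (hu : ‖u‖ = ‖u'‖) (hv : ‖v‖ = ‖v'‖) (huv : ⟪u, v⟫ = ⟪u', v'⟫) (a b : ℝ) :
    ‖a • u + b • v‖ = ‖a • u' + b • v'‖ := by
  refine (sq_eq_sq₀ (norm_nonneg _) (norm_nonneg _)).mp ?_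
  simp only [norm_add_sq_real, norm_smul, mul_pow, real_inner_smul_left, real_inner_smul_right,
    hu, hv, huv]

lemma StrongDual.comp_innerSL_prod {E : Type*} [NormedAddCommGroup E] [InnerProductSpace ℝ E]
    (L : StrongDual ℝ (ℝ × ℝ)) (u v : E) :
    L.comp ((innerSL ℝ u).prod (innerSL ℝ v)) = innerSL ℝ (L (1, 0) • u + L (0, 1) • v) := by
  ext x
  have hx : ((⟪u, x⟫, ⟪v, x⟫) : ℝ × ℝ) =
      ⟪u, x⟫ • ((1 : ℝ), (0 : ℝ)) + ⟪v, x⟫ • ((0 : ℝ), (1 : ℝ)) := by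
    ext <;> simp
  simp only [ContinuousLinearMap.comp_apply, ContinuousLinearMap.prod_apply, innerSL_apply_apply,
    inner_add_left, real_inner_smul_left]
  rw [hx, map_add, map_smul, map_smul, smul_eq_mul, smul_eq_mul]
  ring

section

variable {E F : Type*} [NormedAddCommGroup E] [InnerProductSpace ℝ E] [FiniteDimensional ℝ E]
  [MeasurableSpace E] [BorelSpace E] [NormedAddCommGroup F] [InnerProductSpace ℝ F]
  [FiniteDimensional ℝ F] [MeasurableSpace F] [BorelSpace F]

lemma stdGaussian_map_innerSL_prod_eq {u v : E} {u' v' : F} (hu : ‖u‖ = ‖u'‖)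
    (hv : ‖v‖ = ‖v'‖) (huv : ⟪u, v⟫ = ⟪u', v'⟫) :
    (stdGaussian E).map ((innerSL ℝ u).prod (innerSL ℝ v)) =
      (stdGaussian F).map ((innerSL ℝ u').prod (innerSL ℝ v')) := by
  refine Measure.ext_of_charFunDual (funext fun L ↦ ?_)
  rw [charFunDual_map, charFunDual_map, charFunDual_stdGaussian, charFunDual_stdGaussian,
    StrongDual.comp_innerSL_prod, StrongDual.comp_innerSL_prod, innerSL_apply_norm,
    innerSL_apply_norm, norm_smul_add_smul_eq_of_inner_eq hu hv huv]

theorem integral_sign_inner_mul_sign_inner_stdGaussian {u v : E} (hu : ‖u‖ = 1) (hv : ‖v‖ = 1) :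
    ∫ x, sign ⟪u, x⟫ * sign ⟪v, x⟫ ∂stdGaussian E = 2 / π * arcsin ⟪u, v⟫ := by
  set φ := arccos ⟪u, v⟫
  obtain ⟨hρ₁, hρ₂⟩ : -1 ≤ ⟪u, v⟫ ∧ ⟪u, v⟫ ≤ 1 := by
    simpa [hu, hv] using abs_le.mp (abs_real_inner_le_norm u v)
  have hcos : cos φ = ⟪u, v⟫ := cos_arccos hρ₁ hρ₂
  have hsign : Measurable fun p : ℝ × ℝ ↦ sign p.1 * sign p.2 :=
    (measurable_sign.comp measurable_fst).mul (measurable_sign.comp measurable_snd)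
  have hgram : (stdGaussian E).map ((innerSL ℝ u).prod (innerSL ℝ v)) =
      (stdGaussian (EuclideanSpace ℝ (Fin 2))).map
        ((innerSL ℝ (EuclideanSpace.single 0 1)).prod (innerSL ℝ !₂[cos φ, sin φ])) := by
    refine stdGaussian_map_innerSL_prod_eq ?_ ?_ ?_
    · simp [hu]
    · simp [hv, EuclideanSpace.norm_eq, Fin.sum_univ_two]
    · simp [EuclideanSpace.inner_single_left, hcos]
  calc ∫ x, sign ⟪u, x⟫ * sign ⟪v, x⟫ ∂stdGaussian E
      = ∫ p, sign p.1 * sign p.2 ∂(stdGaussian E).map ((innerSL ℝ u).prod (innerSL ℝ v)) :=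
        (integral_map ((innerSL ℝ u).prod (innerSL ℝ v)).measurable.aemeasurable
          hsign.aestronglyMeasurable).symm
    _ = ∫ p, sign p.1 * sign (cos φ * p.1 + sin φ * p.2)
          ∂(gaussianReal 0 1).prod (gaussianReal 0 1) := by
        rw [hgram, stdGaussian_map_innerSL_prod_single_cos_sin,
          integral_map (by fun_prop) hsign.aestronglyMeasurable]
    _ = 1 - 2 * φ / π :=
        integral_sign_mul_sign_cos_mul_add_sin_mul (arccos_nonneg _) (arccos_le_pi _)
    _ = 2 / π * arcsin ⟪u, v⟫ := by
        rw [show φ = π / 2 - arcsin ⟪u, v⟫ from arccos_eq_pi_div_two_sub_arcsin _]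
        field_simp
        ring

end

/-- Grothendieck's identity. For a standard Gaussian vector g in ℝⁿ and
unit vectors u, v: E[sign⟨g,u⟩ · sign⟨g,v⟩] = (2/π) arcsin⟨u,v⟩. -/
theorem stmt_11 {n : ℕ} (u v : Fin n → ℝ)
    (hu : ∑ i, u i ^ 2 = 1) (hv : ∑ i, v i ^ 2 = 1) :
    ∫ g : Fin n → ℝ,
        Real.sign (∑ i, g i * u i) * Real.sign (∑ i, g i * v i)
        ∂(Measure.pi fun _ : Fin n => gaussianReal 0 1) =
      (2 / Real.pi) * Real.arcsin (∑ i, u i * v i) := by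
  have hsign : Measurable fun x : EuclideanSpace ℝ (Fin n) ↦
      sign ⟪WithLp.toLp 2 u, x⟫ * sign ⟪WithLp.toLp 2 v, x⟫ :=
    (measurable_sign.comp (by fun_prop)).mul (measurable_sign.comp (by fun_prop))
  have h := integral_sign_inner_mul_sign_inner_stdGaussian (E := EuclideanSpace ℝ (Fin n))
    (u := WithLp.toLp 2 u) (v := WithLp.toLp 2 v) (by simp [EuclideanSpace.norm_eq, hu])
    (by simp [EuclideanSpace.norm_eq, hv])
  rw [← map_pi_eq_stdGaussian, integral_map (by fun_prop) hsign.aestronglyMeasurable] at h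
  simpa [PiLp.inner_apply, mul_comm] using h
end

section
/- Let Z*= Σ_{k=1}^K l_k U_k U_kᵀ be the membership matrix of a partition of {1,…,n} into communities C₁,…,C_K of sizes l_k, where U_k is the unit vector with entries 1/√l_k on C_k and 0 elsewhere, and let P⊥(M) = (I − UUᵀ)M(I − UUᵀ) with U = [U₁,…,U_K]. Then for every Z ∈ C = {Z ⪰ 0, Z_{ij} ∈ [0,1], Z_{ii} = 1}: P⊥(Z) ⪰ 0, its nuclear norm equals its trace, and Tr(P⊥(Z)) = Σ_k (1/l_k) Σ_{i,j ∈ C_k} |Z*_{ij} − Z_{ij}| ≤ (max_k 1/l_k)·‖Z − Z*‖₁. -/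
/-!
`P⊥(Z)` is a compression of `Z` by the orthogonal projection `1 - UUᵀ`, hence positive
semidefinite, and for a positive semidefinite matrix the singular values are the eigenvalues.
Since `1 - UUᵀ` is idempotent, `Tr P⊥(Z) = Tr Z - Tr (Z UUᵀ)`; here `Tr Z = n = Σ_k l_k` by the
unit diagonal and `Tr (Z UUᵀ) = Σ_k (1/l_k) Σ_{C_k × C_k} Z_ij`, so the trace is
`Σ_k (1/l_k) Σ_{C_k × C_k} (1 - Z_ij)`, and `1 - Z_ij = |Z*_ij - Z_ij|` on the diagonal blocks
because `Z_ij ≤ 1`. The bound follows by dropping the off-diagonal blocks of `‖Z - Z*‖₁`.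
-/

open Finset Matrix

/-- nuclear norm of a real square matrix: sum of its singular values, i.e. the sum of
the square roots of the eigenvalues of MᵀM. -/
noncomputable def nuclearNorm {n : ℕ} (M : Matrix (Fin n) (Fin n) ℝ) : ℝ :=
  ∑ i, Real.sqrt ((show (Mᵀ * M).IsHermitian by
    simpa [Matrix.conjTranspose_eq_transpose_of_trivial] using
      Matrix.isHermitian_conjTranspose_mul_self M).eigenvalues i)

open scoped MatrixOrder in
theorem Matrix.PosSemidef.trace_cfcSqrt {n : ℕ} {A : Matrix (Fin n) (Fin n) ℝ}
    (hA : A.PosSemidef) : trace (CFC.sqrt A) = ∑ i, Real.sqrt (hA.1.eigenvalues i) := by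
  rw [CFC.sqrt_eq_real_sqrt A hA.nonneg, cfcₙ_eq_cfc, hA.1.cfc_eq, IsHermitian.cfc,
    Unitary.conjStarAlgAut_apply, trace_mul_cycle,
    Unitary.coe_star_mul_self hA.1.eigenvectorUnitary]
  simp [trace_diagonal]

open scoped MatrixOrder in
theorem Matrix.PosSemidef.nuclearNorm_eq_trace {n : ℕ} {M : Matrix (Fin n) (Fin n) ℝ}
    (hM : M.PosSemidef) : nuclearNorm M = trace M := by
  have hMt : Mᵀ = M := IsSymm.eq (by simpa using hM.1)
  have hMtM : (Mᵀ * M).PosSemidef := by simpa using posSemidef_conjTranspose_mul_self M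
  have hsqrt : CFC.sqrt (Mᵀ * M) = M := by rw [hMt, CFC.sqrt_mul_self M hM.nonneg]
  rw [nuclearNorm, ← hMtM.trace_cfcSqrt, hsqrt]

section Compression

variable {ι R : Type*} [Fintype ι] [DecidableEq ι]

theorem Matrix.PosSemidef.one_sub_mul_mul_one_sub [CommRing R] [PartialOrder R] [StarRing R]
    {Z P : Matrix ι ι R} (hZ : Z.PosSemidef) (hP : Pᴴ = P) :
    ((1 - P) * Z * (1 - P)).PosSemidef := by
  have h := hZ.mul_mul_conjTranspose_same (1 - P)
  rwa [conjTranspose_sub, conjTranspose_one, hP] at h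

theorem Matrix.trace_one_sub_mul_mul_one_sub [CommRing R] {P : Matrix ι ι R}
    (hP : IsIdempotentElem P) (Z : Matrix ι ι R) :
    trace ((1 - P) * Z * (1 - P)) = trace Z - trace (Z * P) := by
  rw [trace_mul_cycle, hP.one_sub.eq, trace_mul_comm, mul_sub, mul_one, trace_sub]

end Compression

section Communities

variable {ι κ : Type*} [Fintype ι] [DecidableEq κ]

/-- The matrix `UUᵀ` of the paper, for the communities `C_k = c⁻¹' {k}`. -/
noncomputable def communityProj (c : ι → κ) : Matrix ι ι ℝ :=
  of fun i j => if c i = c j then 1 / (#{m | c m = c i} : ℝ) else 0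

theorem communityProj_apply (c : ι → κ) (i j : ι) :
    communityProj c i j = if c i = c j then 1 / (#{m | c m = c i} : ℝ) else 0 :=
  rfl

theorem conjTranspose_communityProj (c : ι → κ) : (communityProj c)ᴴ = communityProj c := by
  ext i j
  by_cases h : c i = c j
  · simp [communityProj_apply, h]
  · simp [communityProj_apply, h, Ne.symm h]

theorem isIdempotentElem_communityProj [DecidableEq ι] (c : ι → κ) :
    IsIdempotentElem (communityProj c) := by
  ext i j
  rw [mul_apply]
  by_cases h : c i = c j
  · have hterm : ∀ m, communityProj c i m * communityProj c m j =
        if c m = c i then 1 / (#{m | c m = c i} : ℝ) ^ 2 else 0 := by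
      intro m
      by_cases hm : c m = c i
      · simp [communityProj_apply, hm, h.symm, sq]
      · simp [communityProj_apply, hm, Ne.symm hm, h ▸ hm]
    have hpos : (0 : ℝ) < #{m | c m = c i} := by
      exact_mod_cast card_pos.mpr ⟨i, by simp⟩
    rw [sum_congr rfl fun m _ => hterm m, sum_ite, sum_const_zero, add_zero, sum_const,
      nsmul_eq_mul, communityProj_apply, if_pos h]
    field_simp
  · refine (sum_eq_zero fun m _ => ?_).trans (by simp [communityProj_apply, h])
    by_cases hm : c i = c m
    · simp [communityProj_apply, hm ▸ h]
    · simp [communityProj_apply, hm]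

variable [Fintype κ]

theorem trace_mul_communityProj (c : ι → κ) (Z : Matrix ι ι ℝ) :
    trace (Z * communityProj c) =
      ∑ k, 1 / (#{i | c i = k} : ℝ) * ∑ i ∈ {i | c i = k}, ∑ j ∈ {j | c j = k}, Z i j := by
  simp only [trace, diag_apply, mul_apply, communityProj_apply]
  rw [← sum_fiberwise univ c]
  refine sum_congr rfl fun k _ => ?_
  rw [mul_sum]
  refine sum_congr rfl fun i hi => ?_
  rw [(mem_filter.mp hi).2, mul_sum, sum_filter]
  refine sum_congr rfl fun j _ => ?_
  split_ifs <;> simp_all [mul_comm]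

theorem sum_inv_card_mul_card_sq (c : ι → κ) :
    ∑ k, 1 / (#{i | c i = k} : ℝ) *
        ∑ _i ∈ ({i | c i = k} : Finset ι), ∑ _j ∈ ({j | c j = k} : Finset ι), (1 : ℝ) =
      Fintype.card ι := by
  have hfib : ∀ l : ℝ, 1 / l * (l * l) = l := fun l => by
    rcases eq_or_ne l 0 with rfl | hl <;> field_simp
  simp only [sum_const, nsmul_eq_mul, mul_one, hfib]
  exact_mod_cast (card_eq_sum_card_fiberwise (f := c) (t := univ) (by simp)).symm

theorem trace_one_sub_communityProj_mul_mul [DecidableEq ι] (c : ι → κ) {Z : Matrix ι ι ℝ}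
    (hdiag : ∀ i, Z i i = 1) :
    trace ((1 - communityProj c) * Z * (1 - communityProj c)) =
      ∑ k, 1 / (#{i | c i = k} : ℝ) * ∑ i ∈ {i | c i = k}, ∑ j ∈ {j | c j = k}, (1 - Z i j) := by
  have htrZ : trace Z = Fintype.card ι := by simp [trace, hdiag]
  rw [trace_one_sub_mul_mul_one_sub (isIdempotentElem_communityProj c), htrZ,
    trace_mul_communityProj, ← sum_inv_card_mul_card_sq c, ← sum_sub_distrib]
  simp only [← mul_sub, ← sum_sub_distrib]

theorem sum_sum_sum_fiber_le_sum_sum (c : ι → κ) {f : ι → ι → ℝ} (hf : ∀ i j, 0 ≤ f i j) :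
    ∑ k, ∑ i ∈ {i | c i = k}, ∑ j ∈ {j | c j = k}, f i j ≤ ∑ i, ∑ j, f i j := by
  rw [← sum_fiberwise univ c fun i => ∑ j, f i j]
  refine sum_le_sum fun k _ => sum_le_sum fun i _ => ?_
  exact sum_le_sum_of_subset_of_nonneg (subset_univ _) fun j _ _ => hf i j

end Communities

theorem Finset.sum_mul_le_iSup_mul_sum {κ : Type*} [Fintype κ] (a b : κ → ℝ)
    (hb : ∀ k, 0 ≤ b k) : ∑ k, a k * b k ≤ (⨆ k, a k) * ∑ k, b k := by
  rw [mul_sum]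
  gcongr with k
  · exact hb k
  · exact le_ciSup (Set.finite_range a).bddAbove k

theorem stmt_14_general {n K : ℕ} (c : Fin n → Fin K)
    (l : Fin K → ℕ) (hl : ∀ k, l k = (Finset.univ.filter fun i => c i = k).card)
    (Zstar : Matrix (Fin n) (Fin n) ℝ)
    (hZstar : ∀ i j, Zstar i j = if c i = c j then 1 else 0)
    (UU : Matrix (Fin n) (Fin n) ℝ)
    (hUU : ∀ i j, UU i j = if c i = c j then 1 / (l (c i) : ℝ) else 0)
    (Z : Matrix (Fin n) (Fin n) ℝ)
    (hZpsd : Z.PosSemidef)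
    (hZbox : ∀ i j, Z i j ∈ Set.Icc (0:ℝ) 1)
    (hZdiag : ∀ i, Z i i = 1)
    (Pperp : Matrix (Fin n) (Fin n) ℝ)
    (hPperp : Pperp = (1 - UU) * Z * (1 - UU)) :
    Pperp.PosSemidef ∧
      nuclearNorm Pperp = Matrix.trace Pperp ∧
      Matrix.trace Pperp =
        ∑ k, (1 / (l k : ℝ)) *
          ∑ i ∈ Finset.univ.filter (fun i => c i = k),
            ∑ j ∈ Finset.univ.filter (fun j => c j = k), |Zstar i j - Z i j| ∧
      Matrix.trace Pperp ≤
        (⨆ k, 1 / (l k : ℝ)) * ∑ i, ∑ j, |Z i j - Zstar i j| := by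
  obtain rfl : l = fun k => #{i | c i = k} := funext hl
  obtain rfl : UU = communityProj c := Matrix.ext hUU
  subst hPperp
  have hpsd := hZpsd.one_sub_mul_mul_one_sub (conjTranspose_communityProj c)
  have htrace : trace ((1 - communityProj c) * Z * (1 - communityProj c)) =
      ∑ k, 1 / (#{i | c i = k} : ℝ) *
        ∑ i ∈ {i | c i = k}, ∑ j ∈ {j | c j = k}, |Zstar i j - Z i j| := by
    rw [trace_one_sub_communityProj_mul_mul c hZdiag]
    refine sum_congr rfl fun k _ => congrArg _ <| sum_congr rfl fun i hi =>
      sum_congr rfl fun j hj => ?_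
    rw [hZstar, if_pos ((mem_filter.mp hi).2.trans (mem_filter.mp hj).2.symm),
      abs_of_nonneg (sub_nonneg.mpr (hZbox i j).2)]
  refine ⟨hpsd, hpsd.nuclearNorm_eq_trace, htrace, ?_⟩
  calc _ ≤ (⨆ k, 1 / (#{i | c i = k} : ℝ)) *
        ∑ k, ∑ i ∈ {i | c i = k}, ∑ j ∈ {j | c j = k}, |Zstar i j - Z i j| :=
        htrace ▸ sum_mul_le_iSup_mul_sum _ _ fun k => by positivity
    _ ≤ _ := by
      gcongr
      · exact Real.iSup_nonneg fun k => by positivity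
      · simpa only [abs_sub_comm] using sum_sum_sum_fiber_le_sum_sum c fun i j => abs_nonneg _

/-- control of P⊥(Z) for Z in the signed clustering constraint set
(Lemma 7.3).  Communities are encoded by `c : Fin n → Fin K` (surjective), with sizes
`l k`; `UU` is the matrix U Uᵀ with entries 1/l_k on C_k×C_k and 0 elsewhere. -/
theorem stmt_14 {n K : ℕ} (c : Fin n → Fin K) (hcsurj : Function.Surjective c)
    (l : Fin K → ℕ) (hl : ∀ k, l k = (Finset.univ.filter fun i => c i = k).card)
    (Zstar : Matrix (Fin n) (Fin n) ℝ)
    (hZstar : ∀ i j, Zstar i j = if c i = c j then 1 else 0)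
    (UU : Matrix (Fin n) (Fin n) ℝ)
    (hUU : ∀ i j, UU i j = if c i = c j then 1 / (l (c i) : ℝ) else 0)
    (Z : Matrix (Fin n) (Fin n) ℝ)
    (hZpsd : Z.PosSemidef)
    (hZbox : ∀ i j, Z i j ∈ Set.Icc (0:ℝ) 1)
    (hZdiag : ∀ i, Z i i = 1)
    (Pperp : Matrix (Fin n) (Fin n) ℝ)
    (hPperp : Pperp = (1 - UU) * Z * (1 - UU)) :
    Pperp.PosSemidef ∧
      nuclearNorm Pperp = Matrix.trace Pperp ∧
      Matrix.trace Pperp =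
        ∑ k, (1 / (l k : ℝ)) *
          ∑ i ∈ Finset.univ.filter (fun i => c i = k),
            ∑ j ∈ Finset.univ.filter (fun j => c j = k), |Zstar i j - Z i j| ∧
      Matrix.trace Pperp ≤
        (⨆ k, 1 / (l k : ℝ)) * ∑ i, ∑ j, |Z i j - Zstar i j| :=
  stmt_14_general c l hl Zstar hZstar UU hUU Z hZpsd hZbox hZdiag Pperp hPperp
end

section
/- Let Z ∈ C = {Z ∈ R^{n×n} : Z ⪰ 0, Z ≥ 0 entrywise, diag(Z) ⪯ I_n, Σ_{i,j} Z_{ij} ≤ λ} for the community detection SDP, and suppose E[A] satisfies E[A]_{ij} ≥ p for i ∼ j (i ≠ j), E[A]_{ii} = 1, and E[A]_{ij} ≤ q for i ≁ j, with 0 < q < p < 1. Let Z* be the membership matrix (Z*_{ij} = 1 iff i ∼ j) and λ = Σ_{i,j} Z*_{ij}. Then for all Z ∈ C, ⟨E[A], Z* − Z⟩ ≥ ((p − q)/2)·‖Z* − Z‖₁. -/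
/-!
Write `D = Z* - Z`. On a pair `i ∼ j` we have `D ≥ 0` (PSD with unit diagonal bound forces
`Z ≤ 1`) and `E[A] ≥ p`; on a pair `i ≁ j` we have `D ≤ 0` and `E[A] ≤ q`. In both cases
`E[A]ᵢⱼ Dᵢⱼ ≥ (p - q)/2 · |Dᵢⱼ| + (p + q)/2 · Dᵢⱼ`, and summing finishes the proof because
`∑ D ≥ 0` is exactly the constraint `∑ Z ≤ λ`.
-/

open Finset

theorem Matrix.PosSemidef.two_mul_apply_le_add_diag {ι : Type*} [Fintype ι] [DecidableEq ι]
    {Z : Matrix ι ι ℝ} (hZ : Z.PosSemidef) (i j : ι) : 2 * Z i j ≤ Z i i + Z j j := by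
  have hsymm : Z j i = Z i j := by
    simpa using congrFun (congrFun hZ.isHermitian j) i |>.symm
  have h := hZ.dotProduct_mulVec_nonneg (Pi.single i 1 - Pi.single j 1)
  simp only [star_trivial, Matrix.mulVec_sub, dotProduct_sub, sub_dotProduct,
    Matrix.mulVec_single_one, single_dotProduct, one_mul, Matrix.col_apply] at h
  linarith

theorem half_sub_mul_abs_add_half_add_mul_le {p q e d : ℝ}
    (h : (0 ≤ d ∧ p ≤ e) ∨ (d ≤ 0 ∧ e ≤ q)) :
    (p - q) / 2 * |d| + (p + q) / 2 * d ≤ e * d := by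
  rcases h with ⟨hd, he⟩ | ⟨hd, he⟩
  · rw [abs_of_nonneg hd]; nlinarith
  · rw [abs_of_nonpos hd]; nlinarith

theorem half_sub_mul_sum_abs_le_sum_mul {ι : Type*} [Fintype ι] {p q : ℝ} (hpq : 0 ≤ p + q)
    {E D : Matrix ι ι ℝ} (hD : 0 ≤ ∑ i, ∑ j, D i j)
    (hED : ∀ i j, (0 ≤ D i j ∧ p ≤ E i j) ∨ (D i j ≤ 0 ∧ E i j ≤ q)) :
    (p - q) / 2 * ∑ i, ∑ j, |D i j| ≤ ∑ i, ∑ j, E i j * D i j := by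
  calc (p - q) / 2 * ∑ i, ∑ j, |D i j|
      ≤ (p - q) / 2 * ∑ i, ∑ j, |D i j| + (p + q) / 2 * ∑ i, ∑ j, D i j :=
        le_add_of_nonneg_right (mul_nonneg (by linarith) hD)
    _ = ∑ i, ∑ j, ((p - q) / 2 * |D i j| + (p + q) / 2 * D i j) := by
        simp only [mul_sum, sum_add_distrib]
    _ ≤ ∑ i, ∑ j, E i j * D i j :=
        sum_le_sum fun i _ => sum_le_sum fun j _ => half_sub_mul_abs_add_half_add_mul_le (hED i j)

/-- global ℓ₁ curvature of the excess risk in community detection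
(Lemma 7.2 of Guédon–Vershynin).  Communities are encoded by `c : Fin n → Fin K`. -/
theorem stmt_17 {n K : ℕ} (c : Fin n → Fin K) (p q : ℝ)
    (hq0 : 0 < q) (hqp : q < p) (hp1 : p < 1)
    (EA : Matrix (Fin n) (Fin n) ℝ)
    (hEAin : ∀ i j, i ≠ j → c i = c j → p ≤ EA i j)
    (hEAdiag : ∀ i, EA i i = 1)
    (hEAout : ∀ i j, c i ≠ c j → EA i j ≤ q)
    (Zstar : Matrix (Fin n) (Fin n) ℝ)
    (hZstar : ∀ i j, Zstar i j = if c i = c j then 1 else 0)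
    (lam : ℝ) (hlam : lam = ∑ i, ∑ j, Zstar i j)
    (Z : Matrix (Fin n) (Fin n) ℝ)
    (hZpsd : Z.PosSemidef)
    (hZpos : ∀ i j, 0 ≤ Z i j)
    (hZdiag : ∀ i, Z i i ≤ 1)
    (hZsum : ∑ i, ∑ j, Z i j ≤ lam) :
    ((p - q) / 2) * (∑ i, ∑ j, |Zstar i j - Z i j|) ≤ ip EA (Zstar - Z) := by
  have hZle : ∀ i j, Z i j ≤ 1 := fun i j => by
    linarith [hZpsd.two_mul_apply_le_add_diag i j, hZdiag i, hZdiag j]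
  have hEAin' : ∀ i j, c i = c j → p ≤ EA i j := fun i j hc => by
    rcases eq_or_ne i j with rfl | hij
    · linarith [hEAdiag i]
    · exact hEAin i j hij hc
  have hsum : 0 ≤ ∑ i, ∑ j, (Zstar - Z) i j := by
    simp only [Matrix.sub_apply, sum_sub_distrib]
    linarith
  refine half_sub_mul_sum_abs_le_sum_mul (by linarith) hsum fun i j => ?_
  simp only [hZstar]
  split_ifs with hc
  · exact Or.inl ⟨by linarith [hZle i j], hEAin' i j hc⟩
  · exact Or.inr ⟨by linarith [hZpos i j], hEAout i j hc⟩
end
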